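/- The set H = {a_{ij} : i,j ∈ [d]} ∪ {h_{kl} : 1 ≤ k < l ≤ d} generates Q_sat(A) as a monoid: every element of Q_sat is a nonnegative integer combination of elements of H. -/

import Mathlib

open Finset

/-- The column `a_{ij}` of the CDEM matrix: 1 in coordinate `j`, 1 in coordinate
`d + i`, 1 in coordinate `2d` (the last one) iff `i = j`, and 0 elsewhere
(coordinates are 0-based). -/
def acol (d : ℕ) (i j : Fin d) : Fin (2 * d + 1) → ℤ := fun t =>
  (if (t : ℕ) = (j : ℕ) then 1 else 0) +
  (if (t : ℕ) = d + (i : ℕ) then 1 else 0) +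
  (if (t : ℕ) = 2 * d ∧ i = j then 1 else 0)

/-- The vector `h_{kl} = (a_{ll} + a_{lk} + a_{kl} + a_{kk}) / 2`. -/
def hvec (d : ℕ) (k l : Fin d) : Fin (2 * d + 1) → ℤ := fun t =>
  (acol d l l t + acol d l k t + acol d k l t + acol d k k t) / 2

/-- The CDEM semigroup: nonnegative integer combinations of the columns. -/
def cdemQ (d : ℕ) : Set (Fin (2 * d + 1) → ℤ) :=
  {b | ∃ x : Fin d → Fin d → ℕ, b = fun t => ∑ i, ∑ j, (x i j : ℤ) * acol d i j t}

/-- The real cone `K(A)` generated by the CDEM columns. -/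
def cdemCone (d : ℕ) (v : Fin (2 * d + 1) → ℝ) : Prop :=
  ∃ x : Fin d → Fin d → ℝ, (∀ i j, 0 ≤ x i j) ∧
    v = fun t => ∑ i, ∑ j, x i j * (acol d i j t : ℝ)

/-- The saturation `Q_sat = K(A) ∩ ℤ^{2d+1}` of the CDEM semigroup. -/
def cdemQsat (d : ℕ) : Set (Fin (2 * d + 1) → ℤ) :=
  {b | cdemCone d fun t => (b t : ℝ)}

/-- The `i`-th coordinate (0-based, `i < d`) as an index into `Fin (2d+1)`. -/
def idx1 (d : ℕ) (i : Fin d) : Fin (2 * d + 1) := ⟨(i : ℕ), by have := i.isLt; omega⟩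

/-- The `(d+i)`-th coordinate as an index into `Fin (2d+1)`. -/
def idx2 (d : ℕ) (i : Fin d) : Fin (2 * d + 1) := ⟨d + (i : ℕ), by have := i.isLt; omega⟩


/-!
Reading a vector of `ℤ^{2d+1}` through its coordinates as `(c, r, τ)`, a point of `K(A)` is the
column sums, row sums and trace of a nonnegative real `d × d` matrix `w` of total mass `N`. Since
`r i + c i - N ≤ w i i ≤ min (r i) (c i)`, such margins satisfy `r, c ≥ 0`, `∑ r = ∑ c = N` and
`∑ i, max 0 (r i + c i - N) ≤ τ ≤ ∑ i, min (r i) (c i)`. Conversely, an integer triple with these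
properties stays admissible after subtracting a suitable column `a_ij` (mass `N - 1`), except when
two indices carry all the mass and `τ` is strictly below its upper bound; then subtracting `h_kl`
works (mass `N - 2`). Induction on `N` writes every point of `Q_sat` over `H`.
-/

structure AdmissibleMargins {ι R : Type*} [Fintype ι] [AddCommGroup R] [LinearOrder R]
    (N : R) (r c : ι → R) (τ : R) : Prop where
  row_nonneg : ∀ i, 0 ≤ r i
  col_nonneg : ∀ j, 0 ≤ c j
  sum_row : ∑ i, r i = N
  sum_col : ∑ j, c j = N
  sum_excess_le : ∑ i, max 0 (r i + c i - N) ≤ τ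
  le_sum_min : τ ≤ ∑ i, min (r i) (c i)

section Matrix

variable {ι R : Type*} [Fintype ι] [AddCommGroup R] [LinearOrder R] [IsOrderedAddMonoid R]

lemma row_add_col_le_sum_add_diag {w : ι → ι → R} (hw : ∀ i j, 0 ≤ w i j) (i : ι) :
    (∑ j, w i j) + ∑ i', w i' i ≤ (∑ i', ∑ j, w i' j) + w i i := by
  classical
  rw [← add_sum_erase _ (fun i' => w i' i) (mem_univ i),
    ← add_sum_erase _ (fun i' => ∑ j, w i' j) (mem_univ i)]
  calc (∑ j, w i j) + (w i i + ∑ i' ∈ univ.erase i, w i' i)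
      = (∑ j, w i j) + (∑ i' ∈ univ.erase i, w i' i) + w i i := by abel
    _ ≤ (∑ j, w i j) + (∑ i' ∈ univ.erase i, ∑ j, w i' j) + w i i := by
      gcongr with i'
      exact single_le_sum (fun j _ => hw i' j) (mem_univ i)

theorem admissibleMargins_of_nonneg {w : ι → ι → R} (hw : ∀ i j, 0 ≤ w i j) :
    AdmissibleMargins (∑ i, ∑ j, w i j) (fun i => ∑ j, w i j) (fun j => ∑ i, w i j)
      (∑ i, w i i) where
  row_nonneg i := sum_nonneg fun j _ => hw i j
  col_nonneg j := sum_nonneg fun i _ => hw i j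
  sum_row := rfl
  sum_col := sum_comm
  sum_excess_le := sum_le_sum fun i _ =>
    max_le (hw i i) (sub_le_iff_le_add'.2 (row_add_col_le_sum_add_diag hw i))
  le_sum_min := sum_le_sum fun i _ =>
    le_min (single_le_sum (fun j _ => hw i j) (mem_univ i))
      (single_le_sum (fun i' _ => hw i' i) (mem_univ i))

end Matrix

lemma sub_single_nonneg {ι : Type*} [DecidableEq ι] {f : ι → ℤ} (hf : ∀ m, 0 ≤ f m) {i : ι}
    (hi : 0 < f i) (m : ι) : 0 ≤ (f - Pi.single i 1 : ι → ℤ) m := by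
  have := hf m
  by_cases hm : m = i <;> simp [hm] <;> omega

lemma exists_ne_pos_of_lt_sum {ι : Type*} [Fintype ι] [DecidableEq ι] {f : ι → ℤ} {i : ι}
    (h : f i < ∑ m, f m) : ∃ j, i ≠ j ∧ 0 < f j := by
  have : ∑ m ∈ univ.erase i, (0 : ℤ) < ∑ m ∈ univ.erase i, f m := by
    rw [sum_erase_eq_sub (mem_univ i)]; simp; omega
  obtain ⟨j, hj, hfj⟩ := exists_lt_of_sum_lt this
  exact ⟨j, (ne_of_mem_erase hj).symm, hfj⟩

namespace AdmissibleMargins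

variable {ι : Type*} [Fintype ι] {N τ : ℤ} {r c : ι → ℤ}

lemma of_intCast (h : AdmissibleMargins (N : ℝ) (fun i => (r i : ℝ)) (fun j => (c j : ℝ)) τ) :
    AdmissibleMargins N r c τ where
  row_nonneg i := by exact_mod_cast h.row_nonneg i
  col_nonneg j := by exact_mod_cast h.col_nonneg j
  sum_row := by exact_mod_cast h.sum_row
  sum_col := by exact_mod_cast h.sum_col
  sum_excess_le := by exact_mod_cast h.sum_excess_le
  le_sum_min := by exact_mod_cast h.le_sum_min

lemma swap (h : AdmissibleMargins N r c τ) : AdmissibleMargins N c r τ where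
  row_nonneg := h.col_nonneg
  col_nonneg := h.row_nonneg
  sum_row := h.sum_col
  sum_col := h.sum_row
  sum_excess_le := by simpa only [add_comm] using h.sum_excess_le
  le_sum_min := by simpa only [min_comm] using h.le_sum_min

lemma trace_nonneg (h : AdmissibleMargins N r c τ) : 0 ≤ τ :=
  (sum_nonneg fun _ _ => le_max_left _ _).trans h.sum_excess_le

lemma excess_le (h : AdmissibleMargins N r c τ) (i : ι) : r i + c i - N ≤ τ :=
  (le_max_right _ _).trans
    ((single_le_sum (f := fun i => max 0 (r i + c i - N)) (fun _ _ => le_max_left _ _)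
      (mem_univ i)).trans h.sum_excess_le)

lemma row_le (h : AdmissibleMargins N r c τ) (i : ι) : r i ≤ N :=
  h.sum_row ▸ single_le_sum (fun j _ => h.row_nonneg j) (mem_univ i)

lemma row_add_row_le (h : AdmissibleMargins N r c τ) {i j : ι} (hij : i ≠ j) :
    r i + r j ≤ N := by
  classical
  rw [← h.sum_row, ← sum_pair hij]
  exact sum_le_univ_sum_of_nonneg h.row_nonneg

lemma row_add_row_add_row_le (h : AdmissibleMargins N r c τ) {i j k : ι} (hij : i ≠ j)
    (hik : i ≠ k) (hjk : j ≠ k) : r i + r j + r k ≤ N := by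
  classical
  rw [← h.sum_row]
  simpa [hij, hik, hjk, add_assoc] using
    sum_le_univ_sum_of_nonneg (s := {i, j, k}) h.row_nonneg

lemma eq_zero_of_nonpos (h : AdmissibleMargins N r c τ) (hN : N ≤ 0) :
    r = 0 ∧ c = 0 ∧ τ = 0 := by
  have hr : r = 0 := funext fun m => le_antisymm ((h.row_le m).trans hN) (h.row_nonneg m)
  have hc : c = 0 := funext fun m => le_antisymm ((h.swap.row_le m).trans hN) (h.col_nonneg m)
  have hτ := h.le_sum_min
  simp only [hr, hc, Pi.zero_apply, min_self, sum_const_zero] at hτ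
  exact ⟨hr, hc, le_antisymm hτ h.trace_nonneg⟩

lemma eq_zero_of_tight (h : AdmissibleMargins N r c τ) {k l m : ι} (hkl : k ≠ l)
    (hk : N ≤ r k + c k) (hl : N ≤ r l + c l) (hmk : m ≠ k) (hml : m ≠ l) :
    r m = 0 ∧ c m = 0 := by
  have hr := h.row_add_row_add_row_le hkl hmk.symm hml.symm
  have hc := h.swap.row_add_row_add_row_le hkl hmk.symm hml.symm
  have := h.row_nonneg m
  have := h.col_nonneg m
  omega

lemma margins_of_tight (h : AdmissibleMargins N r c τ) {k l : ι} (hkl : k ≠ l)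
    (hk : r k + c k = N) (hl : r l + c l = N) :
    c k = r l ∧ c l = r k ∧ ∑ m, min (r m) (c m) = 2 * min (r k) (r l) := by
  have hzero : ∀ m, m ≠ k ∧ m ≠ l → r m = 0 ∧ c m = 0 := fun m hm =>
    h.eq_zero_of_tight hkl hk.ge hl.ge hm.1 hm.2
  have hr : r k + r l = N := by
    rw [← h.sum_row, Fintype.sum_eq_add k l hkl fun m hm => (hzero m hm).1]
  have hc : c k + c l = N := by
    rw [← h.sum_col, Fintype.sum_eq_add k l hkl fun m hm => (hzero m hm).2]
  have hmin : ∑ m, min (r m) (c m) = min (r k) (c k) + min (r l) (c l) :=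
    Fintype.sum_eq_add k l hkl fun m hm => by simp [hzero m hm]
  omega

lemma row_pos_of_tight (h : AdmissibleMargins N r c τ) (hτ : 0 < τ) {i : ι} (hi : N ≤ r i + c i) :
    0 < r i := by
  by_contra hr
  have hU : ∑ m, min (r m) (c m) ≤ 0 := sum_nonpos fun m _ => by
    by_cases hm : m = i
    · subst hm; exact (min_le_left _ _).trans (not_lt.1 hr)
    · have := h.swap.row_add_row_le hm
      have := h.row_le i
      exact (min_le_right _ _).trans (by omega)
  have := h.le_sum_min
  omega

lemma exists_diag (h : AdmissibleMargins N r c τ) (hτ : 0 < τ)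
    (hpair : ¬ ∃ k l, k ≠ l ∧ N ≤ r k + c k ∧ N ≤ r l + c l) :
    ∃ i, 0 < r i ∧ 0 < c i ∧ ∀ m, m ≠ i → r m + c m < N := by
  by_cases htight : ∃ i, N ≤ r i + c i
  · obtain ⟨i, hi⟩ := htight
    refine ⟨i, h.row_pos_of_tight hτ hi, h.swap.row_pos_of_tight hτ (by omega), fun m hmi => ?_⟩
    exact lt_of_not_ge fun hm => hpair ⟨i, m, Ne.symm hmi, hi, hm⟩
  · push Not at htight
    obtain ⟨i, -, hi⟩ : ∃ i ∈ univ, (0 : ℤ) < min (r i) (c i) :=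
      exists_lt_of_sum_lt (by simpa using hτ.trans_le h.le_sum_min)
    exact ⟨i, by omega, by omega, fun m _ => htight m⟩

variable [DecidableEq ι]

lemma sub_single_diag (h : AdmissibleMargins N r c τ) {i : ι} (hr : 0 < r i) (hc : 0 < c i)
    (hτ : 0 < τ) (hlt : ∀ m, m ≠ i → r m + c m < N) :
    AdmissibleMargins (N - 1) (r - Pi.single i 1) (c - Pi.single i 1) (τ - 1) where
  row_nonneg := sub_single_nonneg h.row_nonneg hr
  col_nonneg := sub_single_nonneg h.col_nonneg hc
  sum_row := by simp [sum_sub_distrib, h.sum_row]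
  sum_col := by simp [sum_sub_distrib, h.sum_col]
  sum_excess_le := by
    rw [Fintype.sum_eq_single i fun m hm => by have := hlt m hm; simp [hm]; omega]
    have := h.excess_le i
    simp only [Pi.sub_apply, Pi.single_eq_same]
    omega
  le_sum_min := by
    have := h.le_sum_min
    simp only [Pi.sub_apply, min_sub_sub_right, sum_sub_distrib]
    simp only [sum_pi_single', mem_univ, if_true]
    omega

lemma sub_single_offDiag (h : AdmissibleMargins N r c 0) {i j : ι} (hij : i ≠ j)
    (hr : 0 < r i) (hc : 0 < c j) (hlt : ∀ m, m ≠ i → m ≠ j → r m + c m < N) :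
    AdmissibleMargins (N - 1) (r - Pi.single i 1) (c - Pi.single j 1) 0 where
  row_nonneg := sub_single_nonneg h.row_nonneg hr
  col_nonneg := sub_single_nonneg h.col_nonneg hc
  sum_row := by simp [sum_sub_distrib, h.sum_row]
  sum_col := by simp [sum_sub_distrib, h.sum_col]
  sum_excess_le := (sum_eq_zero fun m _ => by
    have := h.excess_le m
    by_cases hmi : m = i
    · subst hmi; simp [hij]; omega
    by_cases hmj : m = j
    · subst hmj; simp [hmi]; omega
    · have := hlt m hmi hmj; simp [hmi, hmj]; omega).le
  le_sum_min := sum_nonneg fun m _ =>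
    le_min (sub_single_nonneg h.row_nonneg hr m) (sub_single_nonneg h.col_nonneg hc m)

lemma sub_single_diag_of_tight (h : AdmissibleMargins N r c τ) {k l : ι} (hkl : k ≠ l)
    (hk : r k + c k = N) (hl : r l + c l = N) (hτ : 0 < τ) (hτU : τ = ∑ m, min (r m) (c m)) :
    AdmissibleMargins (N - 1) (r - Pi.single k 1) (c - Pi.single k 1) (τ - 1) := by
  obtain ⟨hck, hcl, hU⟩ := h.margins_of_tight hkl hk hl
  have hrk := h.row_nonneg k
  have hrl := h.row_nonneg l
  refine
    { row_nonneg := sub_single_nonneg h.row_nonneg (by omega)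
      col_nonneg := sub_single_nonneg h.col_nonneg (by omega)
      sum_row := by simp [sum_sub_distrib, h.sum_row]
      sum_col := by simp [sum_sub_distrib, h.sum_col]
      sum_excess_le := ?_
      le_sum_min := ?_ }
  · rw [Fintype.sum_eq_single l fun m hml => ?_]
    · simp [hkl.symm]; omega
    by_cases hmk : m = k
    · subst hmk; simp; omega
    · have := h.eq_zero_of_tight hkl hk.ge hl.ge hmk hml
      simp [hmk]; omega
  · simp only [Pi.sub_apply, min_sub_sub_right, sum_sub_distrib]
    simp only [sum_pi_single', mem_univ, if_true]
    omega

lemma sub_hvec (h : AdmissibleMargins N r c τ) {k l : ι} (hkl : k ≠ l)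
    (hk : r k + c k = N) (hl : r l + c l = N) (hτ : 0 < τ) (hτU : τ < ∑ m, min (r m) (c m)) :
    AdmissibleMargins (N - 2) (r - Pi.single k 1 - Pi.single l 1)
      (c - Pi.single k 1 - Pi.single l 1) (τ - 1) := by
  obtain ⟨hck, hcl, hU⟩ := h.margins_of_tight hkl hk hl
  have hrk := h.row_nonneg k
  have hrl := h.row_nonneg l
  refine
    { row_nonneg := sub_single_nonneg (sub_single_nonneg h.row_nonneg (by omega))
        (by simp [hkl.symm]; omega)
      col_nonneg := sub_single_nonneg (sub_single_nonneg h.col_nonneg (by omega))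
        (by simp [hkl.symm]; omega)
      sum_row := by simp [sum_sub_distrib, h.sum_row]; ring
      sum_col := by simp [sum_sub_distrib, h.sum_col]; ring
      sum_excess_le := ?_
      le_sum_min := ?_ }
  · refine (sum_eq_zero fun m _ => ?_).le.trans (by omega)
    by_cases hmk : m = k
    · subst hmk; simp [hkl]; omega
    by_cases hml : m = l
    · subst hml; simp [hmk]; omega
    · have := h.eq_zero_of_tight hkl hk.ge hl.ge hmk hml
      simp [hmk, hml]; omega
  · simp only [Pi.sub_apply, min_sub_sub_right, sum_sub_distrib]
    simp only [sum_pi_single', mem_univ, if_true]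
    omega

lemma exists_offDiag_of_tight (h : AdmissibleMargins N r c 0) {t : ι} (ht : r t + c t = N)
    (hrt : 0 < r t) : ∃ j, t ≠ j ∧ 0 < c j ∧ ∀ m, m ≠ t → m ≠ j → r m + c m < N := by
  obtain ⟨j, htj, hcj⟩ := exists_ne_pos_of_lt_sum (f := c) (i := t) (by rw [h.sum_col]; omega)
  refine ⟨j, htj, hcj, fun m hmt hmj => lt_of_not_ge fun hm => ?_⟩
  have := h.eq_zero_of_tight hmt.symm ht.ge hm htj.symm (Ne.symm hmj)
  omega

lemma exists_offDiag (h : AdmissibleMargins N r c 0) (hN : 0 < N) :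
    ∃ i j, i ≠ j ∧ 0 < r i ∧ 0 < c j ∧ ∀ m, m ≠ i → m ≠ j → r m + c m < N := by
  by_cases htight : ∃ t, r t + c t = N
  · obtain ⟨t, ht⟩ := htight
    rcases lt_or_ge 0 (r t) with hrt | hrt
    · obtain ⟨j, htj, hcj, hlt⟩ := h.exists_offDiag_of_tight ht hrt
      exact ⟨t, j, htj, hrt, hcj, hlt⟩
    · obtain ⟨i, hti, hri, hlt⟩ := h.swap.exists_offDiag_of_tight (t := t) (by omega) (by omega)
      exact ⟨i, t, hti.symm, hri, by omega, fun m hmi hmt => by have := hlt m hmt hmi; omega⟩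
  · push Not at htight
    have hlt : ∀ m, r m + c m < N := fun m =>
      lt_of_le_of_ne (by have := h.excess_le m; omega) (htight m)
    obtain ⟨i, -, hri⟩ : ∃ i ∈ univ, (0 : ℤ) < r i :=
      exists_lt_of_sum_lt (by simpa [h.sum_row] using hN)
    obtain ⟨j, hij, hcj⟩ := exists_ne_pos_of_lt_sum (f := c) (i := i)
      (by have := hlt i; rw [h.sum_col]; omega)
    exact ⟨i, j, hij, hri, hcj, fun m _ _ => hlt m⟩

theorem exists_reduction (h : AdmissibleMargins N r c τ) (hN : 0 < N) :
    (∃ i j, AdmissibleMargins (N - 1) (r - Pi.single i 1) (c - Pi.single j 1)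
      (τ - if i = j then 1 else 0)) ∨
    ∃ k l, k ≠ l ∧ AdmissibleMargins (N - 2) (r - Pi.single k 1 - Pi.single l 1)
      (c - Pi.single k 1 - Pi.single l 1) (τ - 1) := by
  rcases h.trace_nonneg.eq_or_lt with rfl | hτ
  · obtain ⟨i, j, hij, hr, hc, hlt⟩ := h.exists_offDiag hN
    exact Or.inl ⟨i, j, by simpa [hij] using h.sub_single_offDiag hij hr hc hlt⟩
  by_cases hpair : ∃ k l, k ≠ l ∧ N ≤ r k + c k ∧ N ≤ r l + c l
  · obtain ⟨k, l, hkl, hk, hl⟩ := hpair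
    have hr := h.row_add_row_le hkl
    have hc := h.swap.row_add_row_le hkl
    rcases h.le_sum_min.lt_or_eq with hτU | hτU
    -- the only case that needs some `h_kl`, e.g. `r = c = (1, 1)` and `τ = 1`
    · exact Or.inr ⟨k, l, hkl, h.sub_hvec hkl (by omega) (by omega) hτ hτU⟩
    · exact Or.inl ⟨k, k, by
        simpa using h.sub_single_diag_of_tight hkl (by omega) (by omega) hτ hτU⟩
  · obtain ⟨i, hr, hc, hlt⟩ := h.exists_diag hτ hpair
    exact Or.inl ⟨i, i, by simpa using h.sub_single_diag hr hc hτ hlt⟩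

end AdmissibleMargins

section Coordinates

variable {d : ℕ}

lemma acol_idx1 (i j m : Fin d) : acol d i j (idx1 d m) = if m = j then 1 else 0 := by
  simp only [acol, idx1, Fin.ext_iff]
  split_ifs <;> omega

lemma acol_idx2 (i j m : Fin d) : acol d i j (idx2 d m) = if m = i then 1 else 0 := by
  simp only [acol, idx2, Fin.ext_iff]
  split_ifs <;> omega

lemma acol_last (i j : Fin d) : acol d i j (Fin.last _) = if i = j then 1 else 0 := by
  have := i.isLt; have := j.isLt
  simp only [acol, Fin.val_last, true_and]
  split_ifs <;> omega

lemma hvec_comm (k l : Fin d) : hvec d k l = hvec d l k := by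
  funext t
  simp only [hvec]
  congr 1
  ring

lemma hvec_idx1 (k l m : Fin d) :
    hvec d k l (idx1 d m) = (if m = k then 1 else 0) + (if m = l then 1 else 0) := by
  simp only [hvec, acol_idx1]
  omega

lemma hvec_idx2 (k l m : Fin d) :
    hvec d k l (idx2 d m) = (if m = k then 1 else 0) + (if m = l then 1 else 0) := by
  simp only [hvec, acol_idx2]
  omega

lemma hvec_last {k l : Fin d} (hkl : k ≠ l) : hvec d k l (Fin.last _) = 1 := by
  simp [hvec, acol_last, hkl, hkl.symm]

lemma funext_idx {z w : Fin (2 * d + 1) → ℤ} (h₁ : z ∘ idx1 d = w ∘ idx1 d)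
    (h₂ : z ∘ idx2 d = w ∘ idx2 d) (h₃ : z (Fin.last _) = w (Fin.last _)) : z = w := by
  funext ⟨t, ht⟩
  by_cases ht₁ : t < d
  · exact congrFun h₁ ⟨t, ht₁⟩
  by_cases ht₂ : t < 2 * d
  · have := congrFun h₂ ⟨t - d, by omega⟩
    simpa [idx2, show d + (t - d) = t by omega] using this
  · have := h₃
    simpa [Fin.last, show t = 2 * d by omega] using this

end Coordinates

/-- The monoid `ℕH`, with the coefficients written out as in `cdem_hilbert_basis`. -/
def hilbertMonoid (d : ℕ) : AddSubmonoid (Fin (2 * d + 1) → ℤ) where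
  carrier := {z | ∃ x y : Fin d → Fin d → ℕ,
    z = fun t => (∑ i, ∑ j, (x i j : ℤ) * acol d i j t) +
      ∑ k, ∑ l, if k < l then (y k l : ℤ) * hvec d k l t else 0}
  zero_mem' := ⟨0, 0, funext fun t => by simp⟩
  add_mem' := by
    rintro _ _ ⟨x, y, rfl⟩ ⟨x', y', rfl⟩
    refine ⟨x + x', y + y', funext fun t => ?_⟩
    simp only [Pi.add_apply, Nat.cast_add, add_mul, sum_add_distrib, ite_add_zero]
    ring

lemma acol_mem_hilbertMonoid {d : ℕ} (i j : Fin d) : acol d i j ∈ hilbertMonoid d := by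
  refine ⟨fun i' j' => if i' = i ∧ j' = j then 1 else 0, 0, funext fun t => ?_⟩
  simp [ite_and]

lemma hvec_mem_hilbertMonoid {d : ℕ} {k l : Fin d} (hkl : k ≠ l) :
    hvec d k l ∈ hilbertMonoid d := by
  wlog h : k < l generalizing k l
  · rw [hvec_comm]
    exact this hkl.symm (lt_of_le_of_ne (not_lt.1 h) hkl.symm)
  refine ⟨0, fun k' l' => if k' = k ∧ l' = l then 1 else 0, funext fun t => ?_⟩
  have hy : ∀ k' l' : Fin d,
      (if k' < l' then ((if k' = k ∧ l' = l then 1 else 0 : ℕ) : ℤ) * hvec d k' l' t else 0) =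
        if k' = k ∧ l' = l then hvec d k l t else 0 := by
    intro k' l'
    by_cases hk : k' = k ∧ l' = l
    · simp [hk, h]
    · simp [hk]
  simp only [Pi.zero_apply, Nat.cast_zero, zero_mul, sum_const_zero, zero_add, hy]
  simp [ite_and]

theorem admissibleMargins_of_mem_cdemQsat {d : ℕ} {z : Fin (2 * d + 1) → ℤ}
    (hz : z ∈ cdemQsat d) :
    AdmissibleMargins (∑ i, z (idx2 d i)) (z ∘ idx2 d) (z ∘ idx1 d) (z (Fin.last _)) := by
  obtain ⟨w, hw, hwz⟩ := hz
  have hrow : ∀ i, (z (idx2 d i) : ℝ) = ∑ j, w i j := fun i => by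
    simp [congrFun hwz (idx2 d i), acol_idx2]
  have hcol : ∀ j, (z (idx1 d j) : ℝ) = ∑ i, w i j := fun j => by
    simp [congrFun hwz (idx1 d j), acol_idx1]
  have htr : (z (Fin.last _) : ℝ) = ∑ i, w i i := by
    simp [congrFun hwz (Fin.last _), acol_last]
  refine AdmissibleMargins.of_intCast ?_
  simp only [Function.comp_apply, Int.cast_sum, hrow, hcol, htr]
  exact admissibleMargins_of_nonneg hw

theorem mem_hilbertMonoid_of_admissibleMargins {d : ℕ} {N : ℤ} {z : Fin (2 * d + 1) → ℤ}
    (h : AdmissibleMargins N (z ∘ idx2 d) (z ∘ idx1 d) (z (Fin.last _))) :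
    z ∈ hilbertMonoid d := by
  induction hn : N.toNat using Nat.strong_induction_on generalizing N z with
  | _ n ih =>
  rcases le_or_gt N 0 with hN | hN
  · obtain ⟨hr, hc, hτ⟩ := h.eq_zero_of_nonpos hN
    rw [funext_idx (w := 0) hc hr hτ]
    exact zero_mem _
  rcases h.exists_reduction hN with ⟨i, j, h'⟩ | ⟨k, l, hkl, h'⟩
  · have hmem : z - acol d i j ∈ hilbertMonoid d := by
      refine ih _ (by omega) (N := N - 1) ?_ rfl
      convert h' using 1
      · funext m; simp [acol_idx2, Pi.single_apply]
      · funext m; simp [acol_idx1, Pi.single_apply]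
      · simp [acol_last]
    simpa using add_mem hmem (acol_mem_hilbertMonoid i j)
  · have hmem : z - hvec d k l ∈ hilbertMonoid d := by
      refine ih _ (by omega) (N := N - 2) ?_ rfl
      convert h' using 1
      · funext m; simp [hvec_idx2, Pi.single_apply, sub_add_eq_sub_sub]
      · funext m; simp [hvec_idx1, Pi.single_apply, sub_add_eq_sub_sub]
      · simp [hvec_last hkl]
    simpa using add_mem hmem (hvec_mem_hilbertMonoid hkl)

theorem cdem_hilbert_basis_general (d : ℕ) (z : Fin (2 * d + 1) → ℤ)
    (hz : z ∈ cdemQsat d) :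
    ∃ x : Fin d → Fin d → ℕ, ∃ y : Fin d → Fin d → ℕ,
      z = fun t => (∑ i, ∑ j, (x i j : ℤ) * acol d i j t) +
        ∑ k, ∑ l, if k < l then (y k l : ℤ) * hvec d k l t else 0 :=
  mem_hilbertMonoid_of_admissibleMargins (admissibleMargins_of_mem_cdemQsat hz)

/-- The set `H = {a_{ij}} ∪ {h_{kl} : k < l}` generates `Q_sat(A)` as a monoid:
every element of `Q_sat` is a nonnegative integer combination of elements of `H`. -/
theorem cdem_hilbert_basis (d : ℕ) (hd : 2 ≤ d) (z : Fin (2 * d + 1) → ℤ)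
    (hz : z ∈ cdemQsat d) :
    ∃ x : Fin d → Fin d → ℕ, ∃ y : Fin d → Fin d → ℕ,
      z = fun t => (∑ i, ∑ j, (x i j : ℤ) * acol d i j t) +
        ∑ k, ∑ l, if k < l then (y k l : ℤ) * hvec d k l t else 0 :=
  cdem_hilbert_basis_general d z hz
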